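/- arXiv:math/0602568 — 8 statements merged into one kernel-verified Lean document; each statement's English description precedes it below -/
import Mathlib

section
/- Let G be an abelian group and (a_1,...,a_k) a zero-free sequence in G. Then the sumset Σ_k of (a_1,...,a_k) has cardinality at least k. -/
/-- A list in an additive commutative group is zero-free if no nonempty
sublist sums to zero. -/
def ZeroFree {G : Type*} [AddCommGroup G] (l : List G) : Prop :=
  ∀ t : List G, t.Sublist l → t ≠ [] → t.sum ≠ 0

/-- The sumset of a list: all sums of nonempty sublists. -/
def sumset {G : Type*} [AddCommGroup G] (l : List G) : Set G :=
  {x | ∃ t : List G, t.Sublist l ∧ t ≠ [] ∧ t.sum = x}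

theorem stmt1 {G : Type*} [AddCommGroup G] (l : List G) (hzf : ZeroFree l) :
    l.length ≤ (sumset l).ncard := by
  classical
  -- the sumset is finite
  have hfin : (sumset l).Finite := by
    apply Set.Finite.subset (Set.finite_coe_iff.mp inferInstance :
      (↑((l.sublists.map List.sum).toFinset) : Set G).Finite)
    rintro x ⟨t, ht, -, hsum⟩
    simp only [Finset.coe_sort_coe, List.coe_toFinset, List.mem_map, List.mem_sublists,
      Set.mem_setOf_eq]
    exact ⟨t, ht, hsum⟩
  -- the map sending i to the (i+1)-st prefix sum
  set f : ℕ → G := fun i => (l.take (i + 1)).sum with hf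
  have hmaps : ∀ i ∈ Finset.range l.length, f i ∈ hfin.toFinset := by
    intro i hi
    rw [Set.Finite.mem_toFinset]
    refine ⟨l.take (i + 1), List.take_sublist _ _, ?_, rfl⟩
    have hi' := Finset.mem_range.mp hi
    have hlen : (l.take (i + 1)).length = i + 1 := by
      rw [List.length_take]; omega
    intro h
    rw [h] at hlen
    simp at hlen
  have key : ∀ i j : ℕ, i < j → j < l.length → f i = f j → False := by
    intro i j hlt hj hij
    -- the block between positions i+1 and j+1 sums to zero
    set t : List G := (l.drop (i + 1)).take (j - i) with hT
    have hsplit : l.take (j + 1) = l.take (i + 1) ++ t := by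
      rw [hT]
      have : j + 1 = (i + 1) + (j - i) := by omega
      rw [this, List.take_add]
    have hsub : t.Sublist l :=
      ((List.take_sublist _ _).trans (List.drop_sublist _ _))
    have hne' : t ≠ [] := by
      have : t.length = min (j - i) (l.length - (i + 1)) := by
        rw [hT, List.length_take, List.length_drop]
      intro h
      rw [h] at this
      simp at this
      omega
    have hsum0 : t.sum = 0 := by
      have := congrArg List.sum hsplit
      rw [List.sum_append] at this
      have h1 : f j = f i + t.sum := this
      rw [← hij] at h1
      exact (add_eq_left.mp h1.symm)
    exact hzf t hsub hne' hsum0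
  have hinj : Set.InjOn f (Finset.range l.length) := by
    intro i hi j hj hij
    simp only [Finset.coe_range, Set.mem_Iio] at hi hj
    by_contra hne
    rcases Nat.lt_or_ge i j with h | h
    · exact key i j h hj hij
    · exact key j i (by omega) hi hij.symm
  have := Finset.card_le_card_of_injOn f hmaps hinj
  rw [Finset.card_range] at this
  rwa [Set.ncard_eq_toFinset_card _ hfin]
end

section
/- Let α = (a_1,...,a_k) be a nonempty zero-free sequence in an abelian group G with sumset Σ, and suppose b is a 1-term for the zero-free extension α∪{b}, so that Σ = {b,2b,...,sb} ∪ C_1 ∪ ... ∪ C_m where 1 ≤ s < ord(b)−1 and C_1,...,C_m are complete proper cosets of ⟨b⟩. If c ∈ G is such that α∪{c} is zero-free and c is a 1-term for α∪{c}, then c = b. -/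
/-!
Write `S` for the sumset of `α` and `T = S ∪ {0}`. Since `0 ∉ S`, the translate `T + b` has
`|S| + 1` elements and lies in the sumset `S ∪ (T + b)` of `α ∪ {b}`; so `b` being a 1-term
forces `S ⊆ T + b`, i.e. `x - b ∈ T` for every `x ∈ S`, and likewise for `c`. Applied to the sum
of all of `α` and combined with complementation of subsequences, this puts `c` in `S`.
Now if `c ≠ b`, then `c - b ∈ T \ {0} = S`, hence `-b = (c - b) - c ∈ T`, and
`0 = -b + b` lies in the sumset of `α ∪ {b}`, contradicting zero-freeness.
-/

section

variable {G : Type*} [AddCommGroup G]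

lemma finite_sumset (l : List G) : (sumset l).Finite :=
  (List.finite_toSet (l.sublists.map List.sum)).subset fun _ ⟨t, ht, _, hx⟩ =>
    List.mem_map.mpr ⟨t, List.mem_sublists.mpr ht, hx⟩

lemma sumset_append_singleton (l : List G) (b : G) :
    sumset (l ++ [b]) = sumset l ∪ (· + b) '' insert 0 (sumset l) := by
  ext x
  constructor
  · rintro ⟨t, ht, hne, rfl⟩
    obtain ⟨t₁, t₂, rfl, h₁, h₂⟩ := List.sublist_append_iff.mp ht
    rcases List.sublist_singleton.mp h₂ with rfl | rfl
    · exact .inl ⟨t₁, h₁, by simpa using hne, by simp⟩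
    · refine .inr ⟨t₁.sum, ?_, by simp⟩
      rcases eq_or_ne t₁ [] with rfl | ht₁
      · exact Set.mem_insert _ _
      · exact Set.mem_insert_of_mem _ ⟨t₁, h₁, ht₁, rfl⟩
  · rintro (⟨t, ht, hne, rfl⟩ | ⟨y, rfl | ⟨t, ht, -, rfl⟩, rfl⟩)
    · exact ⟨t, ht.trans (List.sublist_append_left _ _), hne, rfl⟩
    · exact ⟨[b], List.sublist_append_right l [b], by simp, by simp⟩
    · exact ⟨t ++ [b], ht.append (List.Sublist.refl [b]), by simp, by simp⟩

lemma ZeroFree.zero_notMem_sumset {l : List G} (h : ZeroFree l) : (0 : G) ∉ sumset l :=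
  fun ⟨t, ht, hne, hsum⟩ => h t ht hne hsum

lemma ZeroFree.ne_zero_of_mem {l : List G} (h : ZeroFree l) {x : G} (hx : x ∈ l) : x ≠ 0 := by
  simpa using h [x] (List.singleton_sublist.mpr hx) (List.cons_ne_nil x [])

lemma List.Sublist.exists_sublist_sum_add_eq {t l : List G} (h : t.Sublist l) :
    ∃ u : List G, u.Sublist l ∧ t.sum + u.sum = l.sum := by
  induction h with
  | slnil => exact ⟨[], List.Sublist.refl _, by simp⟩
  | @cons _ _ a _ ih =>
    obtain ⟨u, hu, hs⟩ := ih
    exact ⟨a :: u, hu.cons_cons a, by simp only [List.sum_cons, ← hs]; abel⟩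
  | @cons_cons _ _ a _ ih =>
    obtain ⟨u, hu, hs⟩ := ih
    exact ⟨u, hu.cons a, by simp only [List.sum_cons, ← hs]; abel⟩

lemma sum_sub_mem_insert_zero_sumset {l : List G} {x : G} (hx : x ∈ insert 0 (sumset l)) :
    l.sum - x ∈ insert 0 (sumset l) := by
  rcases hx with rfl | ⟨t, ht, -, rfl⟩
  · rcases eq_or_ne l [] with rfl | hl
    · simp
    · exact Set.mem_insert_of_mem _ ⟨l, List.Sublist.refl l, hl, by simp⟩
  · obtain ⟨u, hu, hsum⟩ := ht.exists_sublist_sum_add_eq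
    rw [← hsum, add_sub_cancel_left]
    rcases eq_or_ne u [] with rfl | hu₀
    · simp
    · exact Set.mem_insert_of_mem _ ⟨u, hu, hu₀, rfl⟩

lemma sub_mem_insert_zero_sumset_of_ncard_eq {l : List G} {b : G} (h0 : (0 : G) ∉ sumset l)
    (h1 : (sumset (l ++ [b])).ncard = (sumset l).ncard + 1) {x : G} (hx : x ∈ sumset l) :
    x - b ∈ insert 0 (sumset l) := by
  set P := (· + b) '' insert 0 (sumset l)
  have hP : P.ncard = (sumset l).ncard + 1 := by
    rw [Set.ncard_image_of_injective _ (add_left_injective b),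
      Set.ncard_insert_of_notMem h0 (finite_sumset l)]
  have hPeq : P = sumset (l ++ [b]) := by
    refine Set.eq_of_subset_of_ncard_le ?_ (by rw [h1, hP]) (finite_sumset _)
    rw [sumset_append_singleton]
    exact Set.subset_union_right
  obtain ⟨y, hy, rfl⟩ : x ∈ P := by
    rw [hPeq, sumset_append_singleton]
    exact .inl hx
  simpa using hy

end

theorem stmt3 {G : Type*} [AddCommGroup G] (α : List G) (b c : G) (hne : α ≠ [])
    (hzfb : ZeroFree (α ++ [b]))
    (h1b : (sumset (α ++ [b])).ncard = (sumset α).ncard + 1)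
    (hzfc : ZeroFree (α ++ [c]))
    (h1c : (sumset (α ++ [c])).ncard = (sumset α).ncard + 1) :
    c = b := by
  have hS0 : (0 : G) ∉ sumset α := fun h => hzfb.zero_notMem_sumset <| by
    rw [sumset_append_singleton]; exact .inl h
  have hb {x} := sub_mem_insert_zero_sumset_of_ncard_eq (x := x) hS0 h1b
  have hc {x} := sub_mem_insert_zero_sumset_of_ncard_eq (x := x) hS0 h1c
  have hcS : c ∈ sumset α := by
    have h := sum_sub_mem_insert_zero_sumset (hc ⟨α, .refl α, hne, rfl⟩)
    rw [sub_sub_cancel] at h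
    exact h.resolve_left (hzfc.ne_zero_of_mem (by simp))
  by_contra hcb
  have hcb' : c - b ∈ sumset α := (hb hcS).resolve_left (sub_ne_zero.mpr hcb)
  have hneg : -b ∈ insert 0 (sumset α) := by simpa using hc hcb'
  apply hzfb.zero_notMem_sumset
  rw [sumset_append_singleton]
  exact .inr ⟨-b, hneg, neg_add_cancel b⟩
end

section
/- Let k be a positive integer. Every sequence of positive integers of length at least k/2 and with sum less than k is behaving, i.e., its set of nonempty subsequence sums equals {1,2,...,S} where S is its total sum. -/
/-!
Adding an element `a` with `1 ≤ a ≤ S + 1` to a list whose subsequence sums are exactly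
`{1, …, S}` yields a list whose subsequence sums are exactly `{1, …, S + a}`. For a list of
positive integers with sum less than twice its length, the largest element `a` satisfies this
bound with respect to the rest, because the rest has sum at least its length. Removing `a` keeps
the sum below twice the length unless `a = 1`, and then every element is `1`; so induction along
the decreasingly sorted list proves the claim.
-/

/-- The sumset of a list of natural numbers: all sums of nonempty sublists. -/
def sumsetN (l : List ℕ) : Set ℕ :=
  {x | ∃ t : List ℕ, t.Sublist l ∧ t ≠ [] ∧ t.sum = x}

lemma sumsetN_subset_of_subperm {l l' : List ℕ} (h : l.Subperm l') : sumsetN l ⊆ sumsetN l' := by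
  rintro x ⟨t, ht, hne, rfl⟩
  obtain ⟨t', htt', ht'⟩ := ht.subperm.trans h
  exact ⟨t', ht', fun h0 => hne (h0 ▸ htt').symm.eq_nil, htt'.sum_eq⟩

lemma sumsetN_eq_of_perm {l l' : List ℕ} (h : l.Perm l') : sumsetN l = sumsetN l' :=
  (sumsetN_subset_of_subperm h.subperm).antisymm (sumsetN_subset_of_subperm h.symm.subperm)

lemma sumsetN_nil : sumsetN [] = ∅ :=
  Set.eq_empty_of_forall_notMem fun _ ⟨_, ht, hne, _⟩ => hne (List.sublist_nil.mp ht)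

lemma sumsetN_cons (a : ℕ) (t : List ℕ) :
    sumsetN (a :: t) = sumsetN t ∪ {a} ∪ (a + ·) '' sumsetN t := by
  ext x
  constructor
  · rintro ⟨s, hs, hne, rfl⟩
    cases hs with
    | cons _ hs => exact Or.inl (Or.inl ⟨_, hs, hne, rfl⟩)
    | @cons_cons s _ _ hs =>
      rcases eq_or_ne s [] with rfl | hs'
      · exact Or.inl (Or.inr (by simp))
      · exact Or.inr ⟨s.sum, ⟨s, hs, hs', rfl⟩, by simp⟩
  · rintro ((⟨s, hs, hne, rfl⟩ | rfl) | ⟨_, ⟨s, hs, -, rfl⟩, rfl⟩)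
    · exact ⟨s, hs.cons a, hne, rfl⟩
    · exact ⟨[x], (List.nil_sublist t).cons_cons x, by simp, by simp⟩
    · exact ⟨a :: s, hs.cons_cons a, by simp, by simp⟩

lemma Icc_union_singleton_union_image_add {a S : ℕ} (ha : 1 ≤ a) (haS : a ≤ S + 1) :
    Set.Icc 1 S ∪ {a} ∪ (a + ·) '' Set.Icc 1 S = Set.Icc 1 (a + S) := by
  ext x
  simp only [Set.mem_union, Set.mem_singleton_iff, Set.mem_image, Set.mem_Icc]
  constructor
  · rintro ((_ | rfl) | ⟨y, _, rfl⟩) <;> omega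
  · rintro ⟨hx1, hx2⟩
    by_cases hxS : x ≤ S
    · exact Or.inl (Or.inl ⟨hx1, hxS⟩)
    · by_cases hxa : x ≤ a
      · exact Or.inl (Or.inr (by omega))
      · exact Or.inr ⟨x - a, by omega, by omega⟩

lemma sumsetN_cons_eq_Icc {a : ℕ} {t : List ℕ} (ht : sumsetN t = Set.Icc 1 t.sum)
    (ha : 1 ≤ a) (hat : a ≤ t.sum + 1) : sumsetN (a :: t) = Set.Icc 1 (a :: t).sum := by
  rw [sumsetN_cons, ht, Icc_union_singleton_union_image_add ha hat, List.sum_cons]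

lemma sumsetN_eq_Icc_of_pairwise_ge {l : List ℕ} (hl : l.Pairwise (· ≥ ·))
    (hpos : ∀ x ∈ l, 0 < x) (hsum : l.sum < 2 * l.length) :
    sumsetN l = Set.Icc 1 l.sum := by
  induction l with
  | nil => simp at hsum
  | cons a t ih =>
    obtain ⟨hat, ht⟩ := List.pairwise_cons.mp hl
    have hpos_t : ∀ x ∈ t, 0 < x := fun x hx => hpos x (List.mem_cons_of_mem a hx)
    have ha : 1 ≤ a := hpos a List.mem_cons_self
    have hlen_t : t.length ≤ t.sum := List.length_le_sum_of_one_le t hpos_t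
    simp only [List.sum_cons, List.length_cons] at hsum
    have hrest : sumsetN t = Set.Icc 1 t.sum := by
      rcases eq_or_ne t [] with rfl | hne
      · simp [sumsetN_nil]
      refine ih ht hpos_t ?_
      have := List.length_pos_iff.mpr hne
      rcases Nat.lt_or_ge a 2 with ha2 | ha2
      · have : t.sum ≤ t.length := by
          simpa using List.sum_le_card_nsmul t 1 fun x hx => by have := hat x hx; omega
        omega
      · omega
    exact sumsetN_cons_eq_Icc hrest ha (by omega)

theorem stmt7_general (k : ℕ) (l : List ℕ) (hpos : ∀ x ∈ l, 0 < x)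
    (hlen : k ≤ 2 * l.length) (hsum : l.sum < k) :
    sumsetN l = Set.Icc 1 l.sum := by
  have hperm : (l.insertionSort (· ≥ ·)).Perm l := List.perm_insertionSort _ l
  rw [← sumsetN_eq_of_perm hperm, ← hperm.sum_eq]
  exact sumsetN_eq_Icc_of_pairwise_ge (List.pairwise_insertionSort _ l)
    (fun x hx => hpos x (hperm.mem_iff.mp hx)) (by rw [hperm.sum_eq, hperm.length_eq]; omega)

theorem stmt7 (k : ℕ) (hk : 0 < k) (l : List ℕ) (hpos : ∀ x ∈ l, 0 < x)
    (hlen : k ≤ 2 * l.length) (hsum : l.sum < k) :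
    sumsetN l = Set.Icc 1 l.sum :=
  stmt7_general k l hpos hlen hsum
end

section
/- Let α be a zero-free sequence of length ℓ > n/2 in Z/nZ. Suppose that for some k ∈ {1,...,ℓ−2} the first k+1 terms of α form a subsequence whose sumset has size at least 2k+1. Then the remaining ℓ−k−1 terms of α can be rearranged so that the resulting full sequence ends in a 1-term. -/
/-!
Pass to multisets and their subsum sets `Σ(s)` (which contain `0`). Zero-freeness makes the new
total `a + s.sum` a subsum that `s` lacks, so every added term enlarges `Σ` by at least one.
Induct on `|T|` keeping `|Σ(P)| ≥ 2|P|` and `|G| < 2(|P| + |T|)`: if some `t ∈ T` keeps the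
first invariant for `t ::ₘ P`, move it into `P`. Otherwise every `t ∈ T` is a 1-term after `P`.
Translation by a 1-term `a` maps `Σ(P) \ {P.sum}` onto `Σ(P) \ {0}`, and this forces any two
1-terms after a nonempty `P` to coincide; so `T` is constant, and each further copy of its
element is again a 1-term.
-/

open Finset

namespace Multiset

theorem exists_sublist_of_le_coe {α : Type*} {s : Multiset α} {l : List α} (h : s ≤ l) :
    ∃ t : List α, t.Sublist l ∧ (t : Multiset α) = s := by
  rw [← mem_powerset, powerset_coe, mem_coe, List.mem_map] at h
  simpa only [List.mem_sublists] using h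

theorem cons_le_add_of_mem {α : Type*} {s t : Multiset α} {a : α} (ha : a ∈ t) :
    a ::ₘ s ≤ s + t := by
  rw [← singleton_add, add_comm s]
  exact add_le_add_left (singleton_le.mpr ha) s

variable {G : Type*} [AddCommGroup G]

def ZeroSumFree (s : Multiset G) : Prop :=
  ∀ t ≤ s, t ≠ 0 → t.sum ≠ 0

theorem ZeroSumFree.mono {s t : Multiset G} (ht : ZeroSumFree t) (h : s ≤ t) : ZeroSumFree s :=
  fun u hu => ht u (hu.trans h)

theorem ZeroSumFree.sum_ne_add_sum {s t : Multiset G} {a : G} (hz : ZeroSumFree (a ::ₘ s))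
    (ht : t ≤ s) : t.sum ≠ a + s.sum := by
  obtain ⟨c, rfl⟩ := le_iff_exists_add.mp ht
  intro h
  refine hz (a ::ₘ c) (cons_le_cons a le_add_self) cons_ne_zero ?_
  rw [sum_add, add_left_comm] at h
  rw [sum_cons]
  exact left_eq_add.mp h

theorem zeroSumFree_coe {l : List G} : ZeroSumFree (l : Multiset G) ↔ ZeroFree l := by
  refine ⟨fun h t ht ht0 => ?_, fun h s hs hs0 => ?_⟩
  · simpa using h t (coe_le.mpr ht.subperm) (by simpa using ht0)
  · obtain ⟨t, ht, rfl⟩ := exists_sublist_of_le_coe hs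
    rw [sum_coe]
    exact h t ht (by simpa using hs0)

variable [DecidableEq G]

/-- Unlike `sumset`, this contains `0`, the sum of the empty submultiset. -/
def subsums (s : Multiset G) : Finset G :=
  (s.powerset.map Multiset.sum).toFinset

variable {s : Multiset G} {a : G}

theorem mem_subsums {x : G} : x ∈ s.subsums ↔ ∃ t ≤ s, t.sum = x := by
  simp [subsums]

theorem zero_mem_subsums (s : Multiset G) : 0 ∈ s.subsums :=
  mem_subsums.mpr ⟨0, zero_le s, sum_zero⟩

theorem sum_mem_subsums (s : Multiset G) : s.sum ∈ s.subsums :=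
  mem_subsums.mpr ⟨s, le_rfl, rfl⟩

theorem subsums_cons (a : G) (s : Multiset G) :
    (a ::ₘ s).subsums = s.subsums ∪ s.subsums.image (a + ·) := by
  rw [subsums, subsums, powerset_cons, map_add, toFinset_add, map_map, ← toFinset_map, map_map]
  simp only [Function.comp_def, sum_cons]

theorem insert_subset_subsums_cons : insert (a + s.sum) s.subsums ⊆ (a ::ₘ s).subsums := by
  rw [subsums_cons]
  exact insert_subset (mem_union_right _ (mem_image_of_mem _ (sum_mem_subsums s)))
    subset_union_left

theorem ZeroSumFree.add_sum_notMem_subsums (hz : ZeroSumFree (a ::ₘ s)) :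
    a + s.sum ∉ s.subsums := by
  rw [mem_subsums]
  rintro ⟨t, ht, h⟩
  exact hz.sum_ne_add_sum ht h

theorem ZeroSumFree.card_subsums_lt_cons (hz : ZeroSumFree (a ::ₘ s)) :
    #s.subsums < #(a ::ₘ s).subsums :=
  Finset.card_lt_card <| (ssubset_insert hz.add_sum_notMem_subsums).trans_subset
    insert_subset_subsums_cons

/-- `a` is a 1-term after `s` in the paper's sense: the only subsum that `a` creates is the new total
`a + s.sum` (see `ZeroSumFree.isOneTerm_iff_card`). -/
def IsOneTerm (s : Multiset G) (a : G) : Prop :=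
  ∀ x ∈ s.subsums, x ≠ s.sum → a + x ∈ s.subsums

theorem isOneTerm_iff_subsums_cons :
    IsOneTerm s a ↔ (a ::ₘ s).subsums = insert (a + s.sum) s.subsums := by
  constructor
  · intro h
    refine Subset.antisymm ?_ insert_subset_subsums_cons
    rw [subsums_cons]
    refine union_subset (subset_insert _ _) fun _ hy => ?_
    obtain ⟨x, hx, rfl⟩ := mem_image.mp hy
    by_cases hxs : x = s.sum
    · rw [hxs]
      exact mem_insert_self _ _
    · exact mem_insert_of_mem (h x hx hxs)
  · intro h x hx hxs
    have hax : a + x ∈ insert (a + s.sum) s.subsums :=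
      h ▸ subsums_cons a s ▸ mem_union_right _ (mem_image_of_mem _ hx)
    exact (mem_insert.mp hax).resolve_left fun h' => hxs (add_left_cancel h')

theorem ZeroSumFree.isOneTerm_iff_card (hz : ZeroSumFree (a ::ₘ s)) :
    IsOneTerm s a ↔ #(a ::ₘ s).subsums = #s.subsums + 1 := by
  rw [isOneTerm_iff_subsums_cons, ← card_insert_of_notMem hz.add_sum_notMem_subsums]
  exact ⟨fun h => h ▸ rfl,
    fun h => (Finset.eq_of_subset_of_card_le insert_subset_subsums_cons h.le).symm⟩

theorem IsOneTerm.cons_self (h : IsOneTerm s a) : IsOneTerm (a ::ₘ s) a := by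
  intro x hx hxs
  rw [isOneTerm_iff_subsums_cons.mp h] at hx ⊢
  rw [sum_cons] at hxs
  have hx := (mem_insert.mp hx).resolve_left hxs
  by_cases hσ : x = s.sum
  · rw [hσ]
    exact mem_insert_self _ _
  · exact mem_insert_of_mem (h x hx hσ)

theorem IsOneTerm.replicate_add (h : IsOneTerm s a) (m : ℕ) :
    IsOneTerm (replicate m a + s) a := by
  induction m with
  | zero => simpa
  | succ m ih =>
    rw [replicate_succ, cons_add]
    exact ih.cons_self

theorem IsOneTerm.sub_mem_subsums (hz : ZeroSumFree (a ::ₘ s)) (h : IsOneTerm s a) {x : G}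
    (hx : x ∈ s.subsums) (hx0 : x ≠ 0) : x - a ∈ s.subsums := by
  -- translation by `a` maps `s.subsums.erase s.sum` injectively into the equally large
  -- `s.subsums.erase 0`, hence onto it
  have hmaps : (s.subsums.erase s.sum).image (a + ·) ⊆ s.subsums.erase 0 := by
    intro _ hmem
    obtain ⟨y, hy', rfl⟩ := mem_image.mp hmem
    obtain ⟨hys, hy⟩ := Finset.mem_erase.mp hy'
    refine Finset.mem_erase.mpr ⟨?_, h y hy hys⟩
    obtain ⟨t, ht, rfl⟩ := mem_subsums.mp hy
    simpa [sum_cons] using hz (a ::ₘ t) (cons_le_cons a ht) cons_ne_zero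
  have hcard : #(s.subsums.erase 0) ≤ #((s.subsums.erase s.sum).image (a + ·)) := by
    rw [card_image_of_injective _ (add_right_injective a),
      Finset.card_erase_of_mem (sum_mem_subsums s), Finset.card_erase_of_mem (zero_mem_subsums s)]
  have hx' : x ∈ (s.subsums.erase s.sum).image (a + ·) :=
    (Finset.eq_of_subset_of_card_le hmaps hcard).symm ▸ Finset.mem_erase.mpr ⟨hx0, hx⟩
  obtain ⟨y, hy, rfl⟩ := mem_image.mp hx'
  simpa using (Finset.mem_erase.mp hy).2

theorem IsOneTerm.eq {b : G} (hs : s ≠ 0) (hz : ZeroSumFree (a ::ₘ b ::ₘ s))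
    (ha : IsOneTerm s a) (hb : IsOneTerm s b) : a = b := by
  have hza : ZeroSumFree (a ::ₘ s) := hz.mono (cons_le_cons a (le_cons_self s b))
  have hzb : ZeroSumFree (b ::ₘ s) := hz.mono (le_cons_self _ a)
  have hσ : s.sum ≠ 0 := hza s (le_cons_self s a) hs
  have ha0 : a ≠ 0 := by
    simpa using hza {a} (singleton_le.mpr (mem_cons_self a s)) (singleton_ne_zero a)
  -- adding `a` to the subsum `b + (s.sum - a)` would give the fresh total `b + s.sum`
  have h1 : s.sum - a ∈ s.subsums := ha.sub_mem_subsums hza (sum_mem_subsums s) hσ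
  have h2 : b + (s.sum - a) ∈ s.subsums := hb _ h1 (by simpa [sub_eq_self] using ha0)
  by_contra hab
  have h3 : b + (s.sum - a) ≠ s.sum := by
    intro h
    rw [add_sub_left_comm, add_eq_left, sub_eq_zero] at h
    exact hab h.symm
  have h4 := ha _ h2 h3
  rw [show a + (b + (s.sum - a)) = b + s.sum by abel] at h4
  exact hzb.add_sum_notMem_subsums h4

theorem exists_isOneTerm_of_forall_isOneTerm {P T : Multiset G} (hP : P ≠ 0) (hT : T ≠ 0)
    (hz : ZeroSumFree (P + T)) (h : ∀ t ∈ T, IsOneTerm P t) :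
    ∃ b ∈ T, IsOneTerm (P + T.erase b) b := by
  obtain ⟨t, ht⟩ := exists_mem_of_ne_zero hT
  have hconst : ∀ u ∈ T, u = t := by
    intro u hu
    by_contra hut
    refine hut ((h u hu).eq hP (hz.mono ?_) (h t ht))
    rw [← cons_erase hu, add_cons]
    exact cons_le_cons u (cons_le_add_of_mem ((mem_erase_of_ne (Ne.symm hut)).mpr ht))
  have hrep : T.erase t = replicate (card (T.erase t)) t :=
    eq_replicate.mpr ⟨rfl, fun u hu => hconst u (mem_of_mem_erase hu)⟩
  refine ⟨t, ht, ?_⟩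
  rw [hrep, add_comm]
  exact (h t ht).replicate_add _

theorem exists_isOneTerm [Fintype G] {P T : Multiset G} (hP : P ≠ 0) (hT : T ≠ 0)
    (hz : ZeroSumFree (P + T)) (hG : Fintype.card G < 2 * card (P + T))
    (hsub : 2 * card P ≤ #P.subsums) : ∃ b ∈ T, IsOneTerm (P + T.erase b) b := by
  induction hn : card T generalizing P T with
  | zero => exact absurd (card_eq_zero.mp hn) hT
  | succ m ih =>
    by_cases hbig : ∃ t ∈ T, 2 * card (t ::ₘ P) ≤ #(t ::ₘ P).subsums
    · obtain ⟨t, ht, htP⟩ := hbig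
      have hPT : t ::ₘ P + T.erase t = P + T := by rw [cons_add, ← add_cons, cons_erase ht]
      have hT' : T.erase t ≠ 0 := by
        intro h0
        have := card_le_univ (t ::ₘ P).subsums
        rw [← hPT, h0, add_zero] at hG
        omega
      obtain ⟨b, hb, hone⟩ := ih cons_ne_zero hT' (hPT ▸ hz) (hPT ▸ hG) htP
        (by rw [card_erase_of_mem ht, hn]; rfl)
      have htb : t ∈ T.erase b := by
        rcases eq_or_ne t b with rfl | htb
        exacts [hb, (mem_erase_of_ne htb).mpr ht]
      refine ⟨b, mem_of_mem_erase hb, ?_⟩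
      rwa [erase_comm, cons_add, ← add_cons, cons_erase htb] at hone
    · push Not at hbig
      refine exists_isOneTerm_of_forall_isOneTerm hP hT hz fun t ht => ?_
      -- `#(t ::ₘ P).subsums` is squeezed between `#P.subsums + 1` and `2 * card P + 1`
      have hzt : ZeroSumFree (t ::ₘ P) := hz.mono (cons_le_add_of_mem ht)
      have hlt := hzt.card_subsums_lt_cons
      have hle := hbig t ht
      rw [card_cons] at hle
      rw [hzt.isOneTerm_iff_card]
      omega

end Multiset

section Sumset

open Multiset

variable {G : Type*} [AddCommGroup G] [DecidableEq G]

theorem coe_subsums_coe (l : List G) :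
    ((l : Multiset G).subsums : Set G) = insert 0 (sumset l) := by
  ext x
  rw [Finset.mem_coe, mem_subsums, Set.mem_insert_iff]
  constructor
  · rintro ⟨s, hs, rfl⟩
    obtain ⟨t, ht, rfl⟩ := exists_sublist_of_le_coe hs
    rcases eq_or_ne t [] with rfl | ht0
    · exact Or.inl rfl
    · exact Or.inr ⟨t, ht, ht0, sum_coe t⟩
  · rintro (rfl | ⟨t, ht, -, rfl⟩)
    · exact ⟨0, zero_le _, sum_zero⟩
    · exact ⟨t, coe_le.mpr ht.subperm, sum_coe t⟩

theorem ncard_sumset_add_one {l : List G} (hz : ZeroSumFree (l : Multiset G)) :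
    (sumset l).ncard + 1 = #(l : Multiset G).subsums := by
  have h0 : (0 : G) ∉ sumset l := fun ⟨t, ht, ht0, hts⟩ => zeroSumFree_coe.mp hz t ht ht0 hts
  have hfin : (sumset l).Finite :=
    (Finset.finite_toSet _).subset (coe_subsums_coe l ▸ Set.subset_insert 0 (sumset l))
  rw [← Set.ncard_coe_finset, coe_subsums_coe, Set.ncard_insert_of_notMem h0 hfin]

theorem ncard_sumset_concat {l : List G} {b : G} (hz : ZeroSumFree (b ::ₘ (l : Multiset G)))
    (h : IsOneTerm (l : Multiset G) b) : (sumset (l ++ [b])).ncard = (sumset l).ncard + 1 := by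
  have hcoe : ((l ++ [b] : List G) : Multiset G) = b ::ₘ l :=
    coe_eq_coe.mpr (List.perm_append_singleton b l)
  have h1 := ncard_sumset_add_one (hcoe ▸ hz)
  have h2 := ncard_sumset_add_one (hz.mono (le_cons_self _ b))
  have h3 := hz.isOneTerm_iff_card.mp h
  rw [hcoe] at h1
  omega

theorem exists_perm_ncard_sumset_dropLast [Fintype G] {P D : List G} (hP : P ≠ [])
    (hD : D ≠ []) (hz : ZeroFree (P ++ D)) (hG : Fintype.card G < 2 * (P.length + D.length))
    (hsub : 2 * P.length ≤ (sumset P).ncard + 1) :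
    ∃ β : List G, D.Perm β ∧
      (sumset (P ++ β)).ncard = (sumset (P ++ β).dropLast).ncard + 1 := by
  have hz' : ZeroSumFree ((P : Multiset G) + (D : Multiset G)) :=
    coe_add P D ▸ zeroSumFree_coe.mpr hz
  obtain ⟨b, hb, hone⟩ := exists_isOneTerm (by simpa using hP) (by simpa using hD) hz'
    (by simpa using hG) (by simpa [← ncard_sumset_add_one (hz'.mono (le_add_right _ _))])
  have hcoe : ((P ++ D.erase b : List G) : Multiset G) = P + (D : Multiset G).erase b := by
    rw [Multiset.coe_erase, coe_add]
  refine ⟨D.erase b ++ [b],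
    (List.perm_cons_erase (mem_coe.mp hb)).trans (List.perm_append_singleton _ _).symm, ?_⟩
  rw [← List.append_assoc, List.dropLast_concat]
  refine ncard_sumset_concat ?_ (hcoe ▸ hone)
  rwa [hcoe, ← add_cons, cons_erase hb]

end Sumset

theorem stmt8_general (n : ℕ) (hn : 1 < n) (α : List (ZMod n)) (hlen : n < 2 * α.length)
    (hzf : ZeroFree α) (k : ℕ) (hk2 : k ≤ α.length - 2)
    (hbig : 2 * k + 1 ≤ (sumset (α.take (k + 1))).ncard) :
    ∃ β : List (ZMod n), (α.drop (k + 1)).Perm β ∧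
      (sumset (α.take (k + 1) ++ β)).ncard =
        (sumset ((α.take (k + 1) ++ β).dropLast)).ncard + 1 := by
  have : NeZero n := ⟨by omega⟩
  have hPlen : (α.take (k + 1)).length = k + 1 := by rw [List.length_take]; omega
  have hDlen : (α.drop (k + 1)).length = α.length - (k + 1) := List.length_drop
  refine exists_perm_ncard_sumset_dropLast ?_ ?_ (by rwa [List.take_append_drop]) ?_ ?_
  · rw [← List.length_pos_iff]; omega
  · rw [← List.length_pos_iff]; omega
  · rw [ZMod.card, ← List.length_append, List.take_append_drop]; omega
  · omega

theorem stmt8 (n : ℕ) (hn : 1 < n) (α : List (ZMod n)) (hlen : n < 2 * α.length)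
    (hzf : ZeroFree α) (k : ℕ) (hk1 : 1 ≤ k) (hk2 : k ≤ α.length - 2)
    (hbig : 2 * k + 1 ≤ (sumset (α.take (k + 1))).ncard) :
    ∃ β : List (ZMod n), (α.drop (k + 1)).Perm β ∧
      (sumset (α.take (k + 1) ++ β)).ncard =
        (sumset ((α.take (k + 1) ++ β).dropLast)).ncard + 1 :=
  stmt8_general n hn α hlen hzf k hk2 hbig
end

section
/- Every zero-free sequence of length greater than n/2 in Z/nZ contains a term that generates Z/nZ (i.e., has order n). -/
/-!
Write `Σ(l)` for the finite set of sums of sublists of `l`, the empty one included, and `σ` for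
the sum of `l`. If removing a term `x` from a zero-free `l` loses only one subsum, then `Σ(l)` is
closed under `· + x` except at `σ`, and contains `-x` only as `σ`. Walking along multiples of two
such terms `x ≠ b` produces `-x` or `-b` elsewhere in `Σ(l)`, so all terms with this property are
equal. By induction on the length, a zero-free `l` therefore either has at least `2 |l|` subsums,
or `Σ(l)` is an arc `0, c, …, E • c` with `E < ord c` in which every term of `l` other than `c`
costs at least two steps. In `ℤ/nℤ` there are at most `n` subsums, so when `2 |l| > n` the arc
case holds; then `ord c > E ≥ |l| > n / 2` forces `ord c = n`, and `c` occurs in `l`.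
-/

open Finset
open scoped Pointwise

theorem Finset.subset_insert_of_card_union_le {α : Type*} [DecidableEq α] {s t : Finset α}
    {a : α} (h : #(s ∪ t) ≤ #t + 1) (has : a ∈ s) (hat : a ∉ t) : s ⊆ insert a t := by
  intro v hv
  by_contra hvat
  have hsub : insert v (insert a t) ⊆ s ∪ t :=
    insert_subset (mem_union_left _ hv) (insert_subset (mem_union_left _ has) subset_union_right)
  have := card_le_card hsub
  rw [card_insert_of_notMem hvat, card_insert_of_notMem hat] at this
  omega

section

variable {G : Type*} [AddCommGroup G]

theorem pred_addOrderOf_nsmul {x : G} (hx : 0 < addOrderOf x) :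
    (addOrderOf x - 1) • x = -x := by
  rw [eq_neg_iff_add_eq_zero, ← succ_nsmul, Nat.sub_add_cancel hx, addOrderOf_nsmul_eq_zero]

structure ShiftClosed (x σ : G) (P : Set G) : Prop where
  add_mem_of_ne : ∀ ⦃v⦄, v ∈ P → v ≠ σ → v + x ∈ P
  eq_of_neg_mem : -x ∈ P → -x = σ

namespace ShiftClosed

variable {x b σ : G} {P : Set G}

theorem add_nsmul_mem (h : ShiftClosed x σ P) {v : G} (hv : v ∈ P) {k : ℕ}
    (hk : ∀ j < k, v + j • x ≠ σ) : v + k • x ∈ P := by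
  induction k with
  | zero => simpa using hv
  | succ k ih =>
    rw [succ_nsmul, ← add_assoc]
    exact h.add_mem_of_ne (ih fun j hj => hk j (by omega)) (hk k (by omega))

theorem exists_eq_nsmul (h : ShiftClosed x σ P) (h0 : 0 ∈ P) (hx : IsOfFinAddOrder x) :
    ∃ m < addOrderOf x, σ = m • x := by
  by_contra! hσ
  have hd := hx.addOrderOf_pos
  have hwalk := h.add_nsmul_mem h0 (k := addOrderOf x - 1) fun j hj => by
    simpa using (hσ j (by omega)).symm
  rw [zero_add, pred_addOrderOf_nsmul hd] at hwalk
  exact hσ (addOrderOf x - 1) (by omega) <| by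
    rw [pred_addOrderOf_nsmul hd, h.eq_of_neg_mem hwalk]

theorem nsmul_mem_iff (h : ShiftClosed x σ P) (h0 : 0 ∈ P) {m : ℕ} (hm : m < addOrderOf x)
    (hσ : σ = m • x) {j : ℕ} (hj : j < addOrderOf x) : j • x ∈ P ↔ j ≤ m := by
  have inj : ∀ {i k}, i < addOrderOf x → k < addOrderOf x → i • x = k • x → i = k :=
    fun hi hk hik => nsmul_injOn_Iio_addOrderOf hi hk hik
  constructor
  · intro hjP
    by_contra! hmj
    have hwalk := h.add_nsmul_mem hjP (k := addOrderOf x - 1 - j) fun i hi heq => by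
      rw [← add_nsmul, hσ] at heq
      exact absurd (inj (by omega) hm heq) (by omega)
    rw [← add_nsmul, show j + (addOrderOf x - 1 - j) = addOrderOf x - 1 by omega,
      pred_addOrderOf_nsmul (by omega)] at hwalk
    have := h.eq_of_neg_mem hwalk
    rw [← pred_addOrderOf_nsmul (by omega), hσ] at this
    exact absurd (inj (by omega) hm this) (by omega)
  · intro hjm
    simpa using h.add_nsmul_mem h0 (k := j) fun i hi heq => by
      rw [zero_add, hσ] at heq
      exact absurd (inj (by omega) hm heq) (by omega)

theorem add_mem_of_notMem_zmultiples (h : ShiftClosed x σ P) (hx : IsOfFinAddOrder x)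
    (hσ : σ ∈ AddSubgroup.zmultiples x) {v z : G} (hv : v ∈ P)
    (hvx : v ∉ AddSubgroup.zmultiples x) (hz : z ∈ AddSubgroup.zmultiples x) : v + z ∈ P := by
  obtain ⟨k, rfl⟩ :=
    (AddSubmonoid.mem_multiples_iff _ _).1 (hx.mem_multiples_iff_mem_zmultiples.2 hz)
  refine h.add_nsmul_mem hv fun j _ heq => hvx ?_
  rw [eq_sub_of_add_eq heq]
  exact sub_mem hσ (nsmul_mem (AddSubgroup.mem_zmultiples x) j)

theorem eq_of_mem_zmultiples (hx : ShiftClosed x σ P) (hb : ShiftClosed b σ P) (h0 : 0 ∈ P)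
    (hσ0 : σ ≠ 0) (hxfin : IsOfFinAddOrder x) (hbx : b ∈ AddSubgroup.zmultiples x)
    (hb0 : b ≠ 0) : b = x := by
  obtain ⟨m, hm, hσ⟩ := hx.exists_eq_nsmul h0 hxfin
  obtain ⟨k, rfl⟩ :=
    (AddSubmonoid.mem_multiples_iff _ _).1 (hxfin.mem_multiples_iff_mem_zmultiples.2 hbx)
  rw [← mod_addOrderOf_nsmul] at hb hb0 ⊢
  set u := k % addOrderOf x
  have hu : u < addOrderOf x := Nat.mod_lt _ hxfin.addOrderOf_pos
  have inj : ∀ {i j}, i < addOrderOf x → j < addOrderOf x → i • x = j • x → i = j :=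
    fun hi hj hij => nsmul_injOn_Iio_addOrderOf hi hj hij
  have arc : ∀ {j}, j < addOrderOf x → (j • x ∈ P ↔ j ≤ m) := hx.nsmul_mem_iff h0 hm hσ
  have hm0 : m ≠ 0 := by rintro rfl; exact hσ0 (by simp [hσ])
  have hu0 : u ≠ 0 := by intro hu0; exact hb0 (by simp [hu0])
  by_contra hux
  have hu1 : u ≠ 1 := by intro hu1; exact hux (by simp [hu1])
  rcases le_or_gt (m + u) (addOrderOf x) with hmu | hmu
  · have hstep := hb.add_mem_of_ne ((arc (by omega)).2 (Nat.sub_le m 1)) fun heq => by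
      rw [hσ] at heq
      exact absurd (inj (by omega) hm heq) (by omega)
    rw [← add_nsmul] at hstep
    exact absurd ((arc (by omega)).1 hstep) (by omega)
  · have hneg : -(u • x) = (addOrderOf x - u) • x := by
      rw [neg_eq_iff_add_eq_zero, ← add_nsmul, Nat.add_sub_cancel' hu.le,
        addOrderOf_nsmul_eq_zero]
    have := hb.eq_of_neg_mem (hneg ▸ (arc (by omega)).2 (by omega))
    rw [hneg, hσ] at this
    exact absurd (inj (by omega) hm this) (by omega)

theorem mem_zmultiples (hx : ShiftClosed x σ P) (hb : ShiftClosed b σ P) (h0 : 0 ∈ P)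
    (hbP : b ∈ P) (hxfin : IsOfFinAddOrder x) (hbfin : IsOfFinAddOrder b) :
    b ∈ AddSubgroup.zmultiples x := by
  set H := AddSubgroup.zmultiples x
  obtain ⟨m, -, hσ⟩ := hx.exists_eq_nsmul h0 hxfin
  have hσH : σ ∈ H := hσ ▸ nsmul_mem (AddSubgroup.mem_zmultiples x) m
  by_contra hbH
  set π := QuotientAddGroup.mk' H
  have hπ : ∀ v, π v = 0 ↔ v ∈ H := QuotientAddGroup.eq_zero_iff
  -- `w • b` is the first positive multiple of `b` lying in `⟨x⟩`
  set w := addOrderOf (π b)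
  have hw : 0 < w := (π.isOfFinAddOrder hbfin).addOrderOf_pos
  have hw1 : w ≠ 1 := fun h => hbH ((hπ b).1 (AddMonoid.addOrderOf_eq_one_iff.1 h))
  obtain ⟨k, hk⟩ : ∃ k, w = k + 2 := ⟨w - 2, by omega⟩
  have hwb : π (w • b) = 0 := by rw [map_nsmul, addOrderOf_nsmul_eq_zero]
  have hstart : b + -(w • b) ∈ P :=
    hx.add_mem_of_notMem_zmultiples hxfin hσH hbP hbH (neg_mem ((hπ _).1 hwb))
  have hwalk := hb.add_nsmul_mem hstart (k := k) fun j hj heq => by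
    have hπj : π (b + -(w • b) + j • b) = (j + 1) • π b := by
      rw [map_add, map_add, map_neg, hwb, map_nsmul, succ_nsmul]
      abel
    refine nsmul_ne_zero_of_lt_addOrderOf (Nat.succ_ne_zero j) (by omega : j + 1 < w) ?_
    rw [← hπj, heq, hπ]
    exact hσH
  have hnegb : b + -(w • b) + k • b = -b := by
    rw [hk, add_nsmul, two_nsmul]
    abel
  rw [hnegb] at hwalk
  exact hbH (by rw [← neg_neg b, hb.eq_of_neg_mem hwalk]; exact neg_mem hσH)

theorem eq_of_shiftClosed (hx : ShiftClosed x σ P) (hb : ShiftClosed b σ P) (h0 : 0 ∈ P)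
    (hσ0 : σ ≠ 0) (hbP : b ∈ P) (hb0 : b ≠ 0) (hG : IsAddTorsion G) : b = x :=
  hx.eq_of_mem_zmultiples hb h0 hσ0 (hG x) (hx.mem_zmultiples hb h0 hbP (hG x) (hG b)) hb0

end ShiftClosed

namespace ZeroFree

variable {l l' : List G} {x : G}

theorem of_subperm (h : ZeroFree l) (hl : l'.Subperm l) : ZeroFree l' := by
  intro t ht hne hsum
  obtain ⟨t', hperm, ht'⟩ := ht.subperm.trans hl
  exact h t' ht' (fun h' => hne (by subst h'; exact hperm.symm.eq_nil)) (hperm.sum_eq ▸ hsum)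

theorem ne_zero_of_mem_s11 (h : ZeroFree l) (hx : x ∈ l) : x ≠ 0 := by
  simpa using h [x] (List.singleton_sublist.2 hx) (List.cons_ne_nil x [])

theorem sum_ne_zero (h : ZeroFree l) (hl : l ≠ []) : l.sum ≠ 0 :=
  h l (List.Sublist.refl l) hl

end ZeroFree

section Subsums

variable [DecidableEq G]

/-- Unlike `sumset`, this includes the sum `0` of the empty sublist. -/
def subsums : List G → Finset G
  | [] => {0}
  | a :: l => subsums l ∪ (a +ᵥ subsums l)

theorem subsums_cons (a : G) (l : List G) :
    subsums (a :: l) = subsums l ∪ (a +ᵥ subsums l) :=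
  rfl

theorem mem_subsums {l : List G} {v : G} :
    v ∈ subsums l ↔ ∃ t : List G, t.Sublist l ∧ t.sum = v := by
  induction l generalizing v with
  | nil => simp [subsums, eq_comm]
  | cons a l ih =>
    simp only [subsums_cons, mem_union, mem_vadd_finset, ih, List.sublist_cons_iff, vadd_eq_add]
    constructor
    · rintro (⟨t, ht, rfl⟩ | ⟨_, ⟨t, ht, rfl⟩, rfl⟩)
      · exact ⟨t, .inl ht, rfl⟩
      · exact ⟨a :: t, .inr ⟨t, rfl, ht⟩, List.sum_cons⟩
    · rintro ⟨t, ht | ⟨r, rfl, hr⟩, rfl⟩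
      · exact .inl ⟨t, ht, rfl⟩
      · exact .inr ⟨_, ⟨r, hr, rfl⟩, List.sum_cons.symm⟩

theorem zero_mem_subsums (l : List G) : 0 ∈ subsums l :=
  mem_subsums.2 ⟨[], List.nil_sublist l, rfl⟩

theorem sum_mem_subsums (l : List G) : l.sum ∈ subsums l :=
  mem_subsums.2 ⟨l, List.Sublist.refl l, rfl⟩

theorem mem_subsums_of_mem {l : List G} {a : G} (h : a ∈ l) : a ∈ subsums l :=
  mem_subsums.2 ⟨[a], List.singleton_sublist.2 h, List.sum_singleton⟩

theorem subsums_subset_of_subperm {l l' : List G} (h : l.Subperm l') :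
    subsums l ⊆ subsums l' := by
  intro v hv
  obtain ⟨t, ht, rfl⟩ := mem_subsums.1 hv
  obtain ⟨t', hperm, ht'⟩ := ht.subperm.trans h
  exact mem_subsums.2 ⟨t', ht', hperm.sum_eq⟩

theorem List.Perm.subsums_eq {l l' : List G} (h : l.Perm l') : subsums l = subsums l' :=
  (subsums_subset_of_subperm h.subperm).antisymm (subsums_subset_of_subperm h.symm.subperm)

theorem sum_sub_mem_subsums {l : List G} {v : G} (hv : v ∈ subsums l) :
    l.sum - v ∈ subsums l := by
  induction l generalizing v with
  | nil => simpa [subsums] using hv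
  | cons a l ih =>
    rw [subsums_cons, mem_union, mem_vadd_finset] at hv ⊢
    rcases hv with hv | ⟨w, hw, rfl⟩
    · exact .inr ⟨_, ih hv, by rw [List.sum_cons, vadd_eq_add]; abel⟩
    · exact .inl (by simpa [vadd_eq_add] using ih hw)

theorem ZeroFree.neg_notMem_subsums {l : List G} {x : G} (h : ZeroFree (x :: l)) :
    -x ∉ subsums l := by
  intro hx
  obtain ⟨t, ht, hsum⟩ := mem_subsums.1 hx
  exact h (x :: t) (ht.cons_cons x) (List.cons_ne_nil x t)
    (by rw [List.sum_cons, hsum, add_neg_cancel])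

section Pivot

variable {l : List G} {x : G}

theorem add_mem_subsums_of_card_le (hl : ZeroFree (x :: l))
    (hcard : #(subsums (x :: l)) ≤ #(subsums l) + 1) {v : G} (hv : v ∈ subsums l)
    (hne : v ≠ l.sum) : v + x ∈ subsums l := by
  have hsub : subsums l ⊆ insert 0 (x +ᵥ subsums l) := by
    refine subset_insert_of_card_union_le (by rwa [card_vadd_finset]) (zero_mem_subsums l) ?_
    intro h0
    obtain ⟨w, hw, hxw⟩ := mem_vadd_finset.1 h0
    rw [vadd_eq_add, ← eq_neg_add_iff_add_eq, add_zero] at hxw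
    exact hl.neg_notMem_subsums (hxw ▸ hw)
  have hdown : ∀ w ∈ subsums l, w ≠ 0 → w - x ∈ subsums l := by
    intro w hw hw0
    obtain ⟨u, hu, rfl⟩ := mem_vadd_finset.1 ((mem_insert.1 (hsub hw)).resolve_left hw0)
    simpa [vadd_eq_add] using hu
  -- reflecting through `v ↦ l.sum - v` turns the step `- x` into `+ x`
  have := sum_sub_mem_subsums (hdown _ (sum_sub_mem_subsums hv) (sub_ne_zero.2 (Ne.symm hne)))
  rwa [sub_sub, sub_sub_cancel] at this

theorem shiftClosed_subsums_cons (hl : ZeroFree (x :: l))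
    (hcard : #(subsums (x :: l)) ≤ #(subsums l) + 1) :
    ShiftClosed x (x :: l).sum (subsums (x :: l) : Set G) := by
  have hup : ∀ {v}, v ∈ subsums l → v ≠ l.sum → v + x ∈ subsums l :=
    add_mem_subsums_of_card_le hl hcard
  rw [List.sum_cons]
  constructor
  · intro v hv hne
    rw [mem_coe, subsums_cons, mem_union, mem_vadd_finset] at hv ⊢
    rcases hv with hv | ⟨a, ha, rfl⟩
    · by_cases hvs : v = l.sum
      · exact .inr ⟨l.sum, sum_mem_subsums l, by rw [hvs, vadd_eq_add, add_comm]⟩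
      · exact .inl (hup hv hvs)
    · exact .inr ⟨a + x, hup ha fun h => hne (by rw [h, vadd_eq_add]), by
        rw [vadd_eq_add, vadd_eq_add]; abel⟩
  · intro h
    rw [mem_coe, subsums_cons, mem_union, mem_vadd_finset] at h
    rcases h with h | ⟨a, ha, hax⟩
    · exact absurd h hl.neg_notMem_subsums
    · rw [vadd_eq_add] at hax
      by_contra hne
      refine hl.neg_notMem_subsums ?_
      rw [← hax, add_comm]
      exact hup ha fun h => hne (by rw [← hax, h])

theorem shiftClosed_subsums_of_mem (hl : ZeroFree l) (hx : x ∈ l)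
    (hcard : #(subsums l) ≤ #(subsums (l.erase x)) + 1) :
    ShiftClosed x l.sum (subsums l : Set G) := by
  have hperm := List.perm_cons_erase hx
  rw [hperm.subsums_eq] at hcard ⊢
  rw [hperm.sum_eq]
  exact shiftClosed_subsums_cons (hl.of_subperm hperm.symm.subperm) hcard

end Pivot

def nsmulArc (c : G) (E : ℕ) : Finset G := (range (E + 1)).image (· • c)

section Arc

variable {c : G} {E e : ℕ}

theorem mem_nsmulArc {v : G} : v ∈ nsmulArc c E ↔ ∃ j ≤ E, j • c = v := by
  simp [nsmulArc]

theorem card_nsmulArc (hE : E < addOrderOf c) : #(nsmulArc c E) = E + 1 := by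
  rw [nsmulArc, card_image_of_injOn, card_range]
  exact nsmul_injOn_Iio_addOrderOf.mono fun j hj => by simp at hj; simp; omega

theorem nsmulArc_union_vadd (he : e ≤ E + 1) :
    nsmulArc c E ∪ ((e • c) +ᵥ nsmulArc c E) = nsmulArc c (E + e) := by
  ext v
  simp only [mem_union, mem_vadd_finset, mem_nsmulArc, vadd_eq_add]
  constructor
  · rintro (⟨j, hj, rfl⟩ | ⟨_, ⟨j, hj, rfl⟩, rfl⟩)
    · exact ⟨j, by omega, rfl⟩
    · exact ⟨e + j, by omega, add_nsmul c e j⟩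
  · rintro ⟨j, hj, rfl⟩
    by_cases hjE : j ≤ E
    · exact .inl ⟨j, hjE, rfl⟩
    · obtain ⟨i, rfl⟩ := Nat.exists_eq_add_of_le (show e ≤ j by omega)
      exact .inr ⟨_, ⟨i, by omega, rfl⟩, (add_nsmul c e i).symm⟩

theorem subsums_replicate (k : ℕ) (x : G) : subsums (List.replicate k x) = nsmulArc x k := by
  induction k with
  | zero => ext; simp [subsums, mem_nsmulArc, eq_comm]
  | succ k ih =>
    rw [List.replicate_succ, subsums_cons, ih]
    simpa using nsmulArc_union_vadd (c := x) (E := k) (e := 1) le_add_self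

/-- A weak form of the Savchev–Chen shape `l = (e₁ • c, …, e_k • c)` with
`e₁ + ⋯ + e_k = E < ord c`: each term other than `c` accounts for at least two of the `E`
steps. -/
def IsArcSeq (c : G) (l : List G) : Prop :=
  ∃ E < addOrderOf c, subsums l = nsmulArc c E ∧ 2 * l.length ≤ E + l.count c

theorem IsArcSeq.perm {l l' : List G} (h : IsArcSeq c l) (hl : l.Perm l') : IsArcSeq c l' := by
  obtain ⟨E, hE, hP, hcount⟩ := h
  exact ⟨E, hE, hl.subsums_eq ▸ hP, by rwa [← hl.length_eq, ← hl.count_eq]⟩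

theorem ZeroFree.isArcSeq_replicate {k : ℕ} {x : G} (h : ZeroFree (List.replicate k x))
    (hx : IsOfFinAddOrder x) : IsArcSeq x (List.replicate k x) := by
  refine ⟨k, ?_, subsums_replicate k x, by simp [List.count_replicate_self]; omega⟩
  by_contra! hk
  refine h _ ((List.replicate_sublist_replicate x).2 hk) ?_ (by simp)
  simpa using hx.addOrderOf_pos.ne'

theorem ZeroFree.isArcSeq_cons_or_card {l : List G} {x : G} (hl : ZeroFree (x :: l))
    (hc : IsArcSeq c l) :
    (∃ c, IsArcSeq c (x :: l)) ∨ 2 * (x :: l).length ≤ #(subsums (x :: l)) := by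
  obtain ⟨E, hE, hP, hcount⟩ := hc
  have hneg : -x ∉ nsmulArc c E := hP ▸ hl.neg_notMem_subsums
  by_cases hx : ∃ e, 1 ≤ e ∧ e ≤ E + 1 ∧ e • c = x
  · obtain ⟨e, he1, heE, rfl⟩ := hx
    refine .inl ⟨c, E + e, ?_, by rw [subsums_cons, hP, nsmulArc_union_vadd heE], ?_⟩
    · by_contra! h
      refine hneg (mem_nsmulArc.2 ⟨addOrderOf c - e, by omega, ?_⟩)
      rw [eq_neg_iff_add_eq_zero, ← add_nsmul, Nat.sub_add_cancel (by omega),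
        addOrderOf_nsmul_eq_zero]
    · rcases Nat.lt_or_ge 1 e with he | he
      · have := List.count_le_count_cons (a := c) (b := e • c) (l := l)
        simp only [List.length_cons]; omega
      · obtain rfl : e = 1 := by omega
        simp only [one_nsmul, List.count_cons_self, List.length_cons]; omega
  · refine .inr ?_
    have hdisj : Disjoint (subsums l) (x +ᵥ subsums l) := by
      rw [hP, disjoint_left]
      intro v hv hv'
      obtain ⟨i, hi, rfl⟩ := mem_nsmulArc.1 hv
      obtain ⟨_, hw, hxv⟩ := mem_vadd_finset.1 hv'
      obtain ⟨j, hj, rfl⟩ := mem_nsmulArc.1 hw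
      rw [vadd_eq_add] at hxv
      rcases le_or_gt i j with hij | hij
      · obtain ⟨k, rfl⟩ := Nat.exists_eq_add_of_le hij
        refine hneg (mem_nsmulArc.2 ⟨k, by omega, ?_⟩)
        rw [add_nsmul] at hxv
        linear_combination (norm := abel) hxv
      · obtain ⟨k, rfl⟩ := Nat.exists_eq_add_of_lt hij
        refine hx ⟨k + 1, by omega, by omega, ?_⟩
        rw [add_assoc, add_nsmul] at hxv
        linear_combination (norm := abel) -hxv
    rw [subsums_cons, card_union_of_disjoint hdisj, card_vadd_finset, hP, card_nsmulArc hE,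
      List.length_cons]
    have := List.count_le_length (a := c) (l := l)
    omega

end Arc

theorem ZeroFree.isArcSeq_or_card_subsums (hG : IsAddTorsion G) {l : List G} (hl : ZeroFree l) :
    (∃ c, IsArcSeq c l) ∨ 2 * l.length ≤ #(subsums l) := by
  by_cases hpivot : ∀ b ∈ l, #(subsums l) ≤ #(subsums (l.erase b)) + 1
  · obtain rfl | hne := eq_or_ne l []
    · exact .inr (by simp)
    obtain ⟨x, hx⟩ := List.exists_mem_of_ne_nil l hne
    have hshift := fun b hb => shiftClosed_subsums_of_mem hl hb (hpivot b hb)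
    have hrep : l = List.replicate l.length x := List.eq_replicate_iff.2 ⟨rfl, fun b hb =>
      (hshift x hx).eq_of_shiftClosed (hshift b hb) (zero_mem_subsums l)
        (hl.sum_ne_zero hne) (mem_subsums_of_mem hb) (hl.ne_zero_of_mem_s11 hb) hG⟩
    rw [hrep] at hl ⊢
    exact .inl ⟨x, hl.isArcSeq_replicate (hG x)⟩
  · push Not at hpivot
    obtain ⟨b, hb, hcard⟩ := hpivot
    have hperm := List.perm_cons_erase hb
    have hlen := List.length_erase_of_mem hb
    have hpos := List.length_pos_of_mem hb
    rcases (hl.of_subperm (List.erase_sublist ..).subperm).isArcSeq_or_card_subsums hG with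
      ⟨c, hc⟩ | hbig
    · rcases (hl.of_subperm hperm.symm.subperm).isArcSeq_cons_or_card hc with ⟨c', hc'⟩ | hbig
      · exact .inl ⟨c', hc'.perm hperm.symm⟩
      · exact .inr (by rwa [hperm.length_eq, hperm.subsums_eq])
    · exact .inr (by omega)
termination_by l.length
decreasing_by rw [List.length_erase_of_mem hb]; omega

end Subsums

end

theorem stmt11 (n : ℕ) (hn : 1 < n) (α : List (ZMod n))
    (hlen : n < 2 * α.length) (hzf : ZeroFree α) :
    ∃ a ∈ α, addOrderOf a = n := by
  have : NeZero n := ⟨by omega⟩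
  have hcard : #(subsums α) ≤ n := (card_le_univ _).trans (ZMod.card n).le
  obtain ⟨c, E, hE, hP, hcount⟩ :=
    (hzf.isArcSeq_or_card_subsums isAddTorsion_of_finite).resolve_right (by omega)
  rw [hP, card_nsmulArc hE] at hcard
  have := List.count_le_length (a := c) (l := α)
  have hdvd : addOrderOf c ∣ n := by simpa using addOrderOf_dvd_card (x := c)
  exact ⟨c, List.count_pos_iff.1 (by omega),
    (Nat.eq_of_dvd_of_lt_two_mul (by omega) hdvd (by omega)).symm⟩
end

section
/- For even n ≥ 6, the sequence in Z/nZ consisting of the class of 2 with multiplicity n/2 − 1, the class of 3, and the class of −1 is a minimal zero sequence of length n/2 + 1 whose index is greater than n (in fact equals 2n). -/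
/-- The least positive representative of a residue class mod n:
the unique integer in {1, ..., n} congruent to it. -/
def lpr (n : ℕ) (a : ZMod n) : ℕ := if a = 0 then n else a.val

lemma stmt13_sublist_pair {G : Type*} {a b : G} {t : List G} (h : t.Sublist [a, b]) :
    t = [] ∨ t = [a] ∨ t = [b] ∨ t = [a, b] := by
  rw [← List.mem_sublists] at h
  simp [List.sublists] at h
  tauto

lemma stmt13_lpr_pos (n : ℕ) [NeZero n] (a : ZMod n) : 1 ≤ lpr n a := by
  unfold lpr; split
  · exact Nat.one_le_iff_ne_zero.2 (NeZero.ne n)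
  · exact Nat.one_le_iff_ne_zero.2 (by simpa [ZMod.val_eq_zero] using ‹a ≠ 0›)

lemma stmt13_lpr_le (n : ℕ) [NeZero n] (a : ZMod n) : lpr n a ≤ n := by
  unfold lpr; split
  · exact le_refl n
  · exact le_of_lt (ZMod.val_lt a)

lemma stmt13_lpr_cast (n : ℕ) [NeZero n] (a : ZMod n) : ((lpr n a : ℕ) : ZMod n) = a := by
  unfold lpr; split
  · simp [ZMod.natCast_self, *]
  · exact ZMod.natCast_rightInverse a

lemma stmt13_key (p A B C x : ℤ) (hp : 3 ≤ p)
    (hA1 : 1 ≤ A) (hA2 : A ≤ 2*p) (hB1 : 1 ≤ B) (hB2 : B ≤ 2*p)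
    (hC1 : 1 ≤ C) (hC2 : C ≤ 2*p) (hx1 : 1 ≤ x) (hx2 : x ≤ 2*p - 1)
    (dA : 2*p ∣ A - 2*x) (dB : 2*p ∣ B - 3*x) (dC : 2*p ∣ C + x) :
    4*p ≤ (p-1)*A + B + C := by
  obtain ⟨c, hc⟩ := dA
  obtain ⟨d, hd⟩ := dB
  obtain ⟨e, he⟩ := dC
  have hcl : -1 ≤ c := by nlinarith
  have hcr : c ≤ 0 := by nlinarith
  have hdl : -2 ≤ d := by nlinarith
  have hdr : d ≤ 0 := by nlinarith
  have he1 : e = 1 := by nlinarith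
  subst he1
  have hC' : C = 2*p - x := by linarith
  interval_cases c <;> interval_cases d
  · have hx : p + 2 ≤ x := by omega
    nlinarith [mul_nonneg (by linarith : (0:ℤ) ≤ p) (by linarith : (0:ℤ) ≤ x - p - 2)]
  · have hx : p + 1 ≤ x := by omega
    nlinarith [mul_nonneg (by linarith : (0:ℤ) ≤ p) (by linarith : (0:ℤ) ≤ x - p - 1)]
  · exfalso; omega
  · exfalso; omega
  · have hx : 3 ≤ x := by omega
    nlinarith [mul_nonneg (by linarith : (0:ℤ) ≤ p) (by linarith : (0:ℤ) ≤ x - 2)]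
  · nlinarith [mul_nonneg (by linarith : (0:ℤ) ≤ p) (by linarith : (0:ℤ) ≤ x - 1)]

theorem stmt13 (n : ℕ) (heven : Even n) (hn : 6 ≤ n)
    (α : List (ZMod n))
    (hα : α = List.replicate (n / 2 - 1) (2 : ZMod n) ++ [(3 : ZMod n), (-1 : ZMod n)]) :
    α.sum = 0 ∧
    (∀ t : List (ZMod n), t.Sublist α → t ≠ [] → t ≠ α → t.sum ≠ 0) ∧
    α.length = n / 2 + 1 ∧
    sInf {m : ℕ | ∃ g : ℤ, IsCoprime g (n : ℤ) ∧
      (α.map (fun a => lpr n ((g : ZMod n) * a))).sum = m} = 2 * n := by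
  have hNZ : NeZero n := ⟨by omega⟩
  obtain ⟨q, hq⟩ := heven
  have h2n : (2 : ℤ) ∣ (n : ℤ) := ⟨q, by push_cast [hq]; ring⟩
  refine ⟨?_, ?_, ?_, ?_⟩
  · -- sum is zero
    rw [hα, List.sum_append, List.sum_replicate, nsmul_eq_mul]
    have h1 : ((n / 2 - 1 : ℕ) : ZMod n) * 2 + [(3 : ZMod n), (-1 : ZMod n)].sum
        = (((n / 2 - 1) * 2 + 2 : ℕ) : ZMod n) := by
      push_cast
      simp
      ring
    rw [h1, show (n / 2 - 1) * 2 + 2 = n by omega, ZMod.natCast_self]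
  · -- minimality
    intro t hsub hne hnal hzero
    rw [hα, List.sublist_append_iff] at hsub
    obtain ⟨t₁, t₂, rfl, h₁, h₂⟩ := hsub
    rw [List.sublist_replicate_iff] at h₁
    obtain ⟨k, hk, rfl⟩ := h₁
    have hrep : (List.replicate k (2 : ZMod n)).sum = ((2 * (k : ℤ) : ℤ) : ZMod n) := by
      rw [List.sum_replicate, nsmul_eq_mul]; push_cast; ring
    rw [List.sum_append, hrep] at hzero
    rcases stmt13_sublist_pair h₂ with rfl | rfl | rfl | rfl
    · -- t₂ = []
      have hk1 : 1 ≤ k := by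
        rcases Nat.eq_zero_or_pos k with rfl | h
        · simp at hne
        · exact h
      have h' : (n : ℤ) ∣ 2 * (k : ℤ) := by
        rw [← ZMod.intCast_zmod_eq_zero_iff_dvd]
        simpa using hzero
      have := Int.le_of_dvd (by positivity) h'
      have : (k : ℤ) ≤ (n : ℤ) / 2 - 1 := by
        have : k ≤ n / 2 - 1 := hk
        omega
      omega
    · -- t₂ = [3]
      have h' : (n : ℤ) ∣ 2 * (k : ℤ) + 3 := by
        rw [← ZMod.intCast_zmod_eq_zero_iff_dvd]
        push_cast
        simpa using hzero
      have := dvd_trans h2n h'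
      omega
    · -- t₂ = [-1]
      have h' : (n : ℤ) ∣ 2 * (k : ℤ) - 1 := by
        rw [← ZMod.intCast_zmod_eq_zero_iff_dvd]
        push_cast
        have h0 : (((2 * (k:ℤ)) : ℤ) : ZMod n) + -1 = 0 := by simpa using hzero
        push_cast at h0
        linear_combination h0
      have := dvd_trans h2n h'
      omega
    · -- t₂ = [3, -1]
      have h' : (n : ℤ) ∣ 2 * (k : ℤ) + 2 := by
        rw [← ZMod.intCast_zmod_eq_zero_iff_dvd]
        push_cast
        have h0 : (((2 * (k:ℤ)) : ℤ) : ZMod n) + (3 + -1) = 0 := by simpa using hzero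
        push_cast at h0
        linear_combination h0
      have hle := Int.le_of_dvd (by positivity) h'
      have hkub : k ≤ n / 2 - 1 := hk
      have hkeq : k = n / 2 - 1 := by omega
      exact hnal (by rw [hα, hkeq])
  · -- length
    rw [hα]; simp; omega
  · -- index
    have hv2 : (2 : ZMod n).val = 2 := by
      rw [show (2 : ZMod n) = ((2 : ℕ) : ZMod n) by push_cast; ring]
      exact ZMod.val_natCast_of_lt (by omega)
    have hv3 : (3 : ZMod n).val = 3 := by
      rw [show (3 : ZMod n) = ((3 : ℕ) : ZMod n) by push_cast; ring]
      exact ZMod.val_natCast_of_lt (by omega)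
    have hvm1 : (-1 : ZMod n).val = n - 1 := by
      rw [show (-1 : ZMod n) = ((n - 1 : ℕ) : ZMod n) by
        push_cast [Nat.cast_sub (by omega : 1 ≤ n)]; simp]
      exact ZMod.val_natCast_of_lt (by omega)
    have hl2 : lpr n (2 : ZMod n) = 2 := by
      unfold lpr; rw [if_neg, hv2]
      intro h; rw [h] at hv2; simp at hv2
    have hl3 : lpr n (3 : ZMod n) = 3 := by
      unfold lpr; rw [if_neg, hv3]
      intro h; rw [h] at hv3; simp at hv3
    have hlm1 : lpr n (-1 : ZMod n) = n - 1 := by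
      unfold lpr; rw [if_neg, hvm1]
      intro h; rw [h] at hvm1; simp at hvm1; omega
    have hmem : 2 * n ∈ {m : ℕ | ∃ g : ℤ, IsCoprime g (n : ℤ) ∧
        (α.map (fun a => lpr n ((g : ZMod n) * a))).sum = m} := by
      refine ⟨1, isCoprime_one_left, ?_⟩
      rw [hα]
      simp only [List.map_append, List.map_replicate, List.sum_append, List.sum_replicate,
        Int.cast_one, one_mul, List.map_cons, List.map_nil, List.sum_cons, List.sum_nil,
        smul_eq_mul, hl2, hl3, hlm1]
      omega
    apply le_antisymm
    · exact Nat.sInf_le hmem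
    · apply le_csInf ⟨2 * n, hmem⟩
      rintro m ⟨g, hg, hsum⟩
      have hg0 : (g : ZMod n) ≠ 0 := by
        intro h
        rw [ZMod.intCast_zmod_eq_zero_iff_dvd] at h
        have := hg.isUnit_of_dvd' h dvd_rfl
        rw [Int.isUnit_iff] at this
        omega
      set x : ℕ := (g : ZMod n).val with hxdef
      have hx1 : 1 ≤ x :=
        Nat.one_le_iff_ne_zero.2 (fun h => hg0 (by rwa [ZMod.val_eq_zero] at h))
      have hx2 : x ≤ n - 1 := by have := ZMod.val_lt (g : ZMod n); omega
      have hxg : ((x : ℕ) : ZMod n) = (g : ZMod n) := ZMod.natCast_rightInverse _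
      set A : ℕ := lpr n ((g : ZMod n) * 2) with hAdef
      set B : ℕ := lpr n ((g : ZMod n) * 3) with hBdef
      set C : ℕ := lpr n ((g : ZMod n) * (-1)) with hCdef
      have hm : m = (n / 2 - 1) * A + (B + C) := by
        rw [hα] at hsum
        simp only [List.map_append, List.map_replicate, List.sum_append, List.sum_replicate,
          List.map_cons, List.map_nil, List.sum_cons, List.sum_nil, smul_eq_mul,
          add_zero] at hsum
        rw [hAdef, hBdef, hCdef]
        omega
      have dA : (n : ℤ) ∣ (A : ℤ) - 2 * (x : ℤ) := by
        rw [← ZMod.intCast_zmod_eq_zero_iff_dvd]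
        push_cast
        rw [stmt13_lpr_cast, hxg]
        ring
      have dB : (n : ℤ) ∣ (B : ℤ) - 3 * (x : ℤ) := by
        rw [← ZMod.intCast_zmod_eq_zero_iff_dvd]
        push_cast
        rw [stmt13_lpr_cast, hxg]
        ring
      have dC : (n : ℤ) ∣ (C : ℤ) + (x : ℤ) := by
        rw [← ZMod.intCast_zmod_eq_zero_iff_dvd]
        push_cast
        rw [stmt13_lpr_cast, hxg]
        ring
      have h2q : (n : ℤ) = 2 * (q : ℤ) := by push_cast [hq]; ring
      rw [h2q] at dA dB dC
      have hkey := stmt13_key (q : ℤ) (A : ℤ) (B : ℤ) (C : ℤ) (x : ℤ) (by omega)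
        (by exact_mod_cast stmt13_lpr_pos n _) (by rw [← h2q]; exact_mod_cast stmt13_lpr_le n _)
        (by exact_mod_cast stmt13_lpr_pos n _) (by rw [← h2q]; exact_mod_cast stmt13_lpr_le n _)
        (by exact_mod_cast stmt13_lpr_pos n _) (by rw [← h2q]; exact_mod_cast stmt13_lpr_le n _)
        (by exact_mod_cast hx1) (by omega)
        dA dB dC
      have hcast : ((m : ℕ) : ℤ) = ((q : ℤ) - 1) * A + B + C := by
        rw [hm]
        push_cast [Nat.cast_sub (by omega : 1 ≤ n / 2)]
        have hq' : (n : ℤ) / 2 = (q : ℤ) := by omega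
        rw [hq']
        ring
      have : (2 * n : ℤ) ≤ (m : ℤ) := by
        rw [hcast, h2q]; linarith
      exact_mod_cast this
end

section
/- Let α be a positive integer sequence of length ℓ with n/2 < ℓ < n and sum at most n−1. If u is the number of ones in α and v is the number of twos, then the maximum multiplicity of a term in α equals max(u, v). -/
/-!
Every term `a ≥ 1` satisfies `2 + [a = x] ≤ a + [a = 1]` when `x ≥ 3`; summing over the sequence,
a value `x ≥ 3` occurring `c` times forces `2ℓ + c ≤ sum + u`, so `sum < 2ℓ` gives `c < u`.
-/

namespace List

theorem two_mul_length_add_count_le_sum_add_count_one {x : ℕ} (hx : 3 ≤ x) :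
    ∀ l : List ℕ, (∀ a ∈ l, 0 < a) → 2 * l.length + l.count x ≤ l.sum + l.count 1
  | [] => fun _ => by simp
  | a :: l => fun hpos => by
    have ha : 0 < a := hpos a mem_cons_self
    have ih := two_mul_length_add_count_le_sum_add_count_one hx l
      fun b hb => hpos b (mem_cons_of_mem a hb)
    simp only [count_cons, length_cons, sum_cons, beq_iff_eq]
    split_ifs <;> omega

theorem count_lt_count_one_of_sum_lt {x : ℕ} (hx : 3 ≤ x) {l : List ℕ} (hpos : ∀ a ∈ l, 0 < a)
    (hsum : l.sum < 2 * l.length) : l.count x < l.count 1 := by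
  have := two_mul_length_add_count_le_sum_add_count_one hx l hpos
  omega

end List

theorem stmt17_general (n ℓ : ℕ) (h1 : n < 2 * ℓ)
    (α : List ℕ) (hpos : ∀ x ∈ α, 0 < x) (hlen : α.length = ℓ)
    (hsum : α.sum ≤ n - 1) :
    ∀ x ∈ α, α.count x ≤ max (α.count 1) (α.count 2) := by
  intro x hx
  have hx0 : 0 < x := hpos x hx
  rcases eq_or_ne x 1 with rfl | hx1
  · exact le_max_left _ _
  rcases eq_or_ne x 2 with rfl | hx2
  · exact le_max_right _ _
  have hsum_lt : α.sum < 2 * α.length := by omega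
  exact (List.count_lt_count_one_of_sum_lt (by omega) hpos hsum_lt).le.trans (le_max_left _ _)

theorem stmt17 (n ℓ : ℕ) (h1 : n < 2 * ℓ) (h2 : ℓ < n)
    (α : List ℕ) (hpos : ∀ x ∈ α, 0 < x) (hlen : α.length = ℓ)
    (hsum : α.sum ≤ n - 1) :
    ∀ x ∈ α, α.count x ≤ max (α.count 1) (α.count 2) :=
  stmt17_general n ℓ h1 α hpos hlen hsum
end

section
/- For integers n ≥ 3 and k ≥ 2 with k ≤ (√(8n−7)−1)/2, the sequence in Z/nZ consisting of the class of 1 with multiplicity ℓ−k+1 and one occurrence each of the classes of 2, 3, ..., k, where ℓ = n − (k²−k)/2 − 1, is a zero-free sequence of length ℓ with exactly k distinct terms; consequently h(n,k) ≥ n − (k²−k)/2. -/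
private lemma sum_aux (j : ℕ) :
    2 * (((List.range j).map (fun i => i + 2)).sum) = j * (j + 3) := by
  induction j with
  | zero => simp
  | succ j ih =>
    rw [List.range_succ, List.map_append, List.sum_append]
    simp only [List.map_cons, List.map_nil, List.sum_cons, List.sum_nil]
    have h : (j + 1) * (j + 1 + 3) = j * (j + 3) + 2 * (j + 2) := by ring
    omega

private def Lnat (m k : ℕ) : List ℕ :=
  List.replicate (m - k + 1) 1 ++ (List.range (k - 1)).map (fun i => i + 2)

private lemma Lnat_sum (m k : ℕ) (hk : 1 ≤ k) (hm : k ≤ m) :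
    2 * (Lnat m k).sum = 2 * m + k * (k - 1) := by
  have h := sum_aux (k - 1)
  simp only [Lnat, List.sum_append, List.sum_replicate, smul_eq_mul, mul_one]
  have h2 : (k-1) * (k-1+3) = k*(k-1) + 2*(k-1) := by
    cases k with
    | zero => omega
    | succ k => simp only [Nat.succ_sub_one]; ring
  omega

private lemma Lnat_length (m k : ℕ) (hk : 1 ≤ k) (hm : k ≤ m) :
    (Lnat m k).length = m := by
  simp [Lnat]; omega

private lemma Lnat_zerofree (n : ℕ) (m k : ℕ) (hk : 1 ≤ k) (hm : k ≤ m)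
    (hsum : (Lnat m k).sum < n) : ZeroFree ((Lnat m k).map (Nat.cast : ℕ → ZMod n)) := by
  intro t ht hne hzero
  obtain ⟨s, hs, rfl⟩ := List.sublist_map_iff.mp ht
  have hsne : s ≠ [] := by rintro rfl; exact hne rfl
  have hsum' : (s.sum : ZMod n) = 0 := by rw [Nat.cast_list_sum]; exact hzero
  have hle : s.sum ≤ (Lnat m k).sum := hs.sum_le_sum (fun a _ => Nat.zero_le a)
  have hpos : 0 < s.sum := by
    rcases Nat.eq_zero_or_pos s.sum with h | h
    swap
    · exact h
    · exfalso
      have := List.sum_eq_zero_iff.mp h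
      obtain ⟨a, ha⟩ := List.exists_mem_of_ne_nil s hsne
      have ha0 := this a ha
      have := hs.subset ha
      have : a ∈ Lnat m k := this
      have : 0 < a := by
        simp only [Lnat, List.mem_append, List.mem_replicate, List.mem_map,
          List.mem_range] at this
        omega
      omega
  have : NeZero n := ⟨by omega⟩
  have := (ZMod.natCast_eq_zero_iff s.sum n).mp hsum'
  have := Nat.le_of_dvd hpos this
  omega

private lemma Lnat_card (n m k : ℕ) (hk : 2 ≤ k) (hm : k ≤ m) (hkn : k < n) :
    ((Lnat m k).map (Nat.cast : ℕ → ZMod n)).toFinset.card = k := by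
  have heq : ((Lnat m k).map (Nat.cast : ℕ → ZMod n)).toFinset
      = (Finset.Icc 1 k).image (Nat.cast : ℕ → ZMod n) := by
    ext x
    simp only [List.mem_toFinset, List.mem_map, Finset.mem_image, Finset.mem_Icc,
      Lnat, List.mem_append, List.mem_replicate, List.mem_range]
    constructor
    · rintro ⟨a, (⟨h1, rfl⟩ | ⟨i, hi, rfl⟩), rfl⟩
      · exact ⟨1, ⟨le_refl 1, by omega⟩, rfl⟩
      · exact ⟨i + 2, ⟨by omega, by omega⟩, rfl⟩
    · rintro ⟨a, ⟨h1, h2⟩, rfl⟩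
      rcases Nat.eq_or_lt_of_le h1 with h | h
      · exact ⟨1, Or.inl ⟨by omega, rfl⟩, by rw [← h]⟩
      · exact ⟨a, Or.inr ⟨a - 2, by omega, by omega⟩, rfl⟩
  rw [heq, Finset.card_image_of_injOn, Nat.card_Icc]
  · omega
  · intro a ha b hb hab
    simp only [Finset.coe_Icc, Set.mem_Icc] at ha hb
    have h1 : a < n := by omega
    have h2 : b < n := by omega
    have := ZMod.val_cast_of_lt (n := n) h1
    have := ZMod.val_cast_of_lt (n := n) h2
    rw [← ZMod.val_cast_of_lt h1, ← ZMod.val_cast_of_lt h2, hab]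

theorem stmt19 (n k : ℕ) (hn : 3 ≤ n) (hk2 : 2 ≤ k)
    (hk : (k : ℝ) ≤ (Real.sqrt (8 * (n : ℝ) - 7) - 1) / 2)
    (ℓ : ℕ) (hℓ : ℓ = n - (k ^ 2 - k) / 2 - 1)
    (β : List (ZMod n))
    (hβ : β = List.replicate (ℓ - k + 1) (1 : ZMod n) ++
          (List.range (k - 1)).map (fun i => ((i + 2 : ℕ) : ZMod n))) :
    ZeroFree β ∧ β.length = ℓ ∧ β.toFinset.card = k ∧
      ∀ m ∈ {m : ℕ | k ≤ m ∧
        ∀ α : List (ZMod n), α.length = m → k ≤ α.toFinset.card →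
          ∃ t : List (ZMod n), t.Sublist α ∧ t ≠ [] ∧ t.sum = 0},
        n - (k ^ 2 - k) / 2 ≤ m := by
  -- numeric bound: k*(k+1) + 2 ≤ 2*n
  have hnum : k * (k + 1) + 2 ≤ 2 * n := by
    have h7 : (0:ℝ) ≤ 8 * (n:ℝ) - 7 := by
      have : (3:ℝ) ≤ (n:ℝ) := by exact_mod_cast hn
      linarith
    have h1 : (2 * k + 1 : ℝ) ≤ Real.sqrt (8 * (n:ℝ) - 7) := by linarith
    have h2 : ((2 * k + 1 : ℝ))^2 ≤ 8 * (n:ℝ) - 7 :=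
      (Real.le_sqrt (by positivity) h7).mp h1
    have : (k:ℝ) * (k + 1) + 2 ≤ 2 * (n:ℝ) := by nlinarith
    exact_mod_cast this
  have hkn : k < n := by nlinarith
  have hd : k ^ 2 - k = k * (k - 1) := by
    cases k with
    | zero => rfl
    | succ m =>
      have h1 : (m+1)^2 = m*m + 2*m + 1 := by ring
      have h2 : (m+1)*(m+1-1) = m*m + m := by simp only [Nat.succ_sub_one]; ring
      omega
  have hdiv : 2 * ((k ^ 2 - k) / 2) = k ^ 2 - k := by
    rw [hd]
    rcases Nat.even_mul_pred_self k with ⟨c, hc⟩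
    · omega
  set d := (k ^ 2 - k) / 2 with hdef
  have h2d : 2 * d = k * (k - 1) := by omega
  have e1 : k * (k + 1) = k * (k - 1) + 2 * k := by
    cases k with
    | zero => rfl
    | succ m => simp only [Nat.succ_sub_one]; ring
  have hℓk : k ≤ ℓ := by omega
  have h2ℓ : 2 * ℓ + k * (k - 1) = 2 * n - 2 := by omega
  -- β as map of Lnat
  have hβ' : β = (Lnat ℓ k).map (Nat.cast : ℕ → ZMod n) := by
    rw [hβ, Lnat, List.map_append, List.map_replicate, Nat.cast_one, List.map_map]
    rfl
  have hsumℓ : (Lnat ℓ k).sum < n := by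
    have := Lnat_sum ℓ k (by omega) hℓk
    omega
  refine ⟨?_, ?_, ?_, ?_⟩
  · rw [hβ']; exact Lnat_zerofree n ℓ k (by omega) hℓk hsumℓ
  · rw [hβ']
    rw [List.length_map]
    exact Lnat_length ℓ k (by omega) hℓk
  · rw [hβ']; exact Lnat_card n ℓ k hk2 hℓk hkn
  · rintro m ⟨hkm, hprop⟩
    by_contra hcon
    push_neg at hcon
    have hmℓ : m ≤ ℓ := by omega
    have hsumm : (Lnat m k).sum < n := by
      have := Lnat_sum m k (by omega) hkm
      omega
    obtain ⟨t, ht, htne, htsum⟩ := hprop ((Lnat m k).map (Nat.cast : ℕ → ZMod n))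
      (by rw [List.length_map]; exact Lnat_length m k (by omega) hkm)
      (le_of_eq (Lnat_card n m k hk2 hkm hkn).symm)
    exact Lnat_zerofree n m k (by omega) hkm hsumm t ht htne htsum
end
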